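/- arXiv:2504.16229 — 3 statements merged into one kernel-verified Lean document; each statement's English description precedes it below -/
import Mathlib

section
/- Let d, k ≥ 1 be integers, z ≥ 1 a real, and γ ≥ 1. Let X ⊆ ℝ^d be finite with more than k distinct points and let x ∈ X. Let C ⊆ X be nonempty with |C| ≤ k and Cost(X,C) ≤ γ · min{Cost(X,T) : ∅ ≠ T ⊆ X, |T| ≤ k}. Let OPT_x = min{Cost(X,T) : T ⊆ X, x ∈ T, |T| ≤ k}. Let C' = W ∪ {x}, where W ⊆ C with |W| ≤ k−1 is chosen so that Cost(X, W ∪ {x}) is minimal over all subsets W ⊆ C with |W| ≤ k−1. Then OPT_x ≤ Cost(X, C') ≤ (2^z + 2^{2z} + 2^{2z}·γ) · OPT_x. -/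
/-!
Let `T` be an optimal solution constrained to contain `x`. Moving every other centre of `T` to
its nearest point of `C` gives a set `W' ⊆ C` of at most `k - 1` points such that
`dist(p, W' ∪ {x}) ≤ 2 dist(p, T) + dist(p, C)` for every `p`: a point served by `t ≠ x` in `T`
is within `dist(p, t) + dist(t, C) ≤ 2 dist(p, t) + dist(p, C)` of the image of `t`. Raising to
the power `z` and summing, `Cost(X, W' ∪ {x}) ≤ 2^{2z} OPT_x + 2^z Cost(X, C)`, and
`Cost(X, C) ≤ γ OPT_x` because `T` is a feasible unconstrained solution. The optimal swap `W` does
at least as well as `W'`.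
-/

open scoped BigOperators Classical

/-- `dSet x C` is the distance from the point `x` to the finite set `C`. -/
noncomputable def dSet {d : ℕ} (x : EuclideanSpace ℝ (Fin d))
    (C : Finset (EuclideanSpace ℝ (Fin d))) : ℝ :=
  sInf ((fun c => dist x c) '' (C : Set (EuclideanSpace ℝ (Fin d))))

/-- `kzCost z X C = Σ_{x ∈ X} dist(x,C)^z`. -/
noncomputable def kzCost {d : ℕ} (z : ℝ) (X C : Finset (EuclideanSpace ℝ (Fin d))) : ℝ :=
  ∑ x ∈ X, dSet x C ^ z

open Finset

lemma Real.add_rpow_le_two_rpow_mul {a b z : ℝ} (ha : 0 ≤ a) (hb : 0 ≤ b) (hz : 0 ≤ z) :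
    (a + b) ^ z ≤ 2 ^ z * (a ^ z + b ^ z) := by
  wlog hab : b ≤ a generalizing a b
  · simpa only [add_comm] using this hb ha (le_of_not_ge hab)
  calc (a + b) ^ z ≤ (2 * a) ^ z := Real.rpow_le_rpow (add_nonneg ha hb) (by linarith) hz
    _ = 2 ^ z * a ^ z := Real.mul_rpow zero_le_two ha
    _ ≤ 2 ^ z * (a ^ z + b ^ z) := by
      gcongr
      exact le_add_of_nonneg_right (Real.rpow_nonneg hb z)

lemma Real.two_mul_add_rpow_le {a b z : ℝ} (ha : 0 ≤ a) (hb : 0 ≤ b) (hz : 0 ≤ z) :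
    (2 * a + b) ^ z ≤ 2 ^ (2 * z) * a ^ z + 2 ^ z * b ^ z :=
  calc (2 * a + b) ^ z ≤ 2 ^ z * ((2 * a) ^ z + b ^ z) :=
        Real.add_rpow_le_two_rpow_mul (by positivity) hb hz
    _ = 2 ^ (2 * z) * a ^ z + 2 ^ z * b ^ z := by
        rw [Real.mul_rpow zero_le_two ha, two_mul z, Real.rpow_add two_pos]; ring

section Medoids

variable {d : ℕ}

local notation "E" => EuclideanSpace ℝ (Fin d)

lemma dSet_eq_inf' (p : E) {C : Finset E} (hC : C.Nonempty) :
    dSet p C = C.inf' hC (dist p) :=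
  (inf'_eq_csInf_image C hC _).symm

lemma dSet_nonneg (p : E) (C : Finset E) : 0 ≤ dSet p C :=
  Real.sInf_nonneg (by rintro r ⟨c, -, rfl⟩; exact dist_nonneg)

lemma dSet_le_dist (p : E) {C : Finset E} {c : E} (hc : c ∈ C) : dSet p C ≤ dist p c := by
  rw [dSet_eq_inf' p ⟨c, hc⟩]
  exact inf'_le _ hc

lemma exists_mem_dSet_eq_dist (p : E) {C : Finset E} (hC : C.Nonempty) :
    ∃ c ∈ C, dSet p C = dist p c := by
  rw [dSet_eq_inf' p hC]
  exact exists_mem_eq_inf' hC _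

lemma dSet_le_dist_add_dSet (p q : E) {C : Finset E} (hC : C.Nonempty) :
    dSet p C ≤ dist p q + dSet q C := by
  obtain ⟨c, hc, hqc⟩ := exists_mem_dSet_eq_dist q hC
  calc dSet p C ≤ dist p c := dSet_le_dist p hc
    _ ≤ dist p q + dist q c := dist_triangle p q c
    _ = dist p q + dSet q C := by rw [hqc]

lemma kzCost_nonneg (z : ℝ) (X C : Finset E) : 0 ≤ kzCost z X C :=
  sum_nonneg fun p _ => Real.rpow_nonneg (dSet_nonneg p C) z

/-- Replacing every centre of `T` other than `x` by its nearest point of `C`. -/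
lemma exists_subset_dSet_insert_le {C T : Finset E} (hC : C.Nonempty) {x : E} (hxT : x ∈ T) :
    ∃ W ⊆ C, W.card ≤ T.card - 1 ∧
      ∀ p, dSet p (insert x W) ≤ 2 * dSet p T + dSet p C := by
  choose nearest hnearest_mem hnearest using fun t : E => exists_mem_dSet_eq_dist t hC
  refine ⟨(T.erase x).image nearest, ?_, ?_, fun p => ?_⟩
  · exact image_subset_iff.mpr fun t _ => hnearest_mem t
  · exact card_image_le.trans (card_erase_of_mem hxT).le
  obtain ⟨t, htT, hpt⟩ := exists_mem_dSet_eq_dist p ⟨x, hxT⟩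
  by_cases htx : t = x
  · calc dSet p (insert x _) ≤ dist p x := dSet_le_dist p (mem_insert_self x _)
      _ ≤ 2 * dSet p T + dSet p C := by rw [← htx, ← hpt]; linarith [dSet_nonneg p T, dSet_nonneg p C]
  · have hmem : nearest t ∈ insert x ((T.erase x).image nearest) :=
      mem_insert_of_mem (mem_image_of_mem _ (mem_erase.mpr ⟨htx, htT⟩))
    calc dSet p (insert x _) ≤ dist p (nearest t) := dSet_le_dist p hmem
      _ ≤ dist p t + dist t (nearest t) := dist_triangle _ _ _
      _ = dist p t + dSet t C := by rw [hnearest]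
      _ ≤ dist p t + (dist t p + dSet p C) := by gcongr; exact dSet_le_dist_add_dSet t p hC
      _ = 2 * dSet p T + dSet p C := by rw [dist_comm t p, ← hpt]; ring

lemma kzCost_le_of_dSet_le {z : ℝ} (hz : 0 ≤ z) (X : Finset E) {A T C : Finset E}
    (h : ∀ p, dSet p A ≤ 2 * dSet p T + dSet p C) :
    kzCost z X A ≤ 2 ^ (2 * z) * kzCost z X T + 2 ^ z * kzCost z X C := by
  unfold kzCost
  rw [mul_sum, mul_sum, ← sum_add_distrib]
  exact sum_le_sum fun p _ => (Real.rpow_le_rpow (dSet_nonneg p A) (h p) hz).trans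
    (Real.two_mul_add_rpow_le (dSet_nonneg p T) (dSet_nonneg p C) hz)

/-- `OPT_x = sInf (constrainedCosts z X x k)`. -/
def constrainedCosts (z : ℝ) (X : Finset E) (x : E) (k : ℕ) : Set ℝ :=
  {r : ℝ | ∃ T : Finset E, T ⊆ X ∧ x ∈ T ∧ T.card ≤ k ∧ r = kzCost z X T}

lemma constrainedCosts_finite (z : ℝ) (X : Finset E) (x : E) (k : ℕ) :
    (constrainedCosts z X x k).Finite := by
  refine ((X.powerset : Set (Finset E)).toFinite.image (kzCost z X)).subset ?_
  rintro r ⟨T, hTX, -, -, rfl⟩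
  exact ⟨T, mem_powerset.mpr hTX, rfl⟩

end Medoids

theorem constrained_medoid_swap_general
    (d k : ℕ) (hk : 1 ≤ k) (z γ : ℝ) (hz : 1 ≤ z)
    (X : Finset (EuclideanSpace ℝ (Fin d)))
    (x : EuclideanSpace ℝ (Fin d)) (hx : x ∈ X)
    (C : Finset (EuclideanSpace ℝ (Fin d))) (hCX : C ⊆ X) (hCne : C.Nonempty)
    (happrox : ∀ T : Finset (EuclideanSpace ℝ (Fin d)),
      T ⊆ X → T.Nonempty → T.card ≤ k → kzCost z X C ≤ γ * kzCost z X T)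
    (W : Finset (EuclideanSpace ℝ (Fin d))) (hWC : W ⊆ C) (hWk : W.card ≤ k - 1)
    (hWmin : ∀ W' : Finset (EuclideanSpace ℝ (Fin d)), W' ⊆ C → W'.card ≤ k - 1 →
      kzCost z X (insert x W) ≤ kzCost z X (insert x W')) :
    sInf {r : ℝ | ∃ T : Finset (EuclideanSpace ℝ (Fin d)),
        T ⊆ X ∧ x ∈ T ∧ T.card ≤ k ∧ r = kzCost z X T} ≤ kzCost z X (insert x W) ∧
      kzCost z X (insert x W) ≤ (2 ^ z + 2 ^ (2 * z) + 2 ^ (2 * z) * γ) *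
        sInf {r : ℝ | ∃ T : Finset (EuclideanSpace ℝ (Fin d)),
          T ⊆ X ∧ x ∈ T ∧ T.card ≤ k ∧ r = kzCost z X T} := by
  change sInf (constrainedCosts z X x k) ≤ _ ∧ _ ≤ _ * sInf (constrainedCosts z X x k)
  have hfin := constrainedCosts_finite z X x k
  have hWfeas : kzCost z X (insert x W) ∈ constrainedCosts z X x k :=
    ⟨insert x W, insert_subset hx (hWC.trans hCX), mem_insert_self x W,
      (card_insert_le x W).trans (by omega), rfl⟩
  refine ⟨csInf_le hfin.bddBelow hWfeas, ?_⟩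
  obtain ⟨T, hTX, hxT, hTk, hopt⟩ := Set.nonempty_of_mem hWfeas |>.csInf_mem hfin
  obtain ⟨W', hW'C, hW'card, hW'⟩ := exists_subset_dSet_insert_le hCne hxT
  have hz0 : 0 ≤ z := by linarith
  have hCT : kzCost z X C ≤ γ * kzCost z X T := happrox T hTX ⟨x, hxT⟩ hTk
  have h2z : (2 : ℝ) ^ z ≤ 2 ^ (2 * z) :=
    Real.rpow_le_rpow_of_exponent_le one_le_two (by linarith)
  rw [hopt]
  calc kzCost z X (insert x W) ≤ kzCost z X (insert x W') := hWmin W' hW'C (by omega)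
    _ ≤ 2 ^ (2 * z) * kzCost z X T + 2 ^ z * kzCost z X C := kzCost_le_of_dSet_le hz0 X hW'
    _ ≤ 2 ^ (2 * z) * kzCost z X T + 2 ^ (2 * z) * (γ * kzCost z X T) := by
        have := mul_le_mul h2z hCT (kzCost_nonneg z X C) (by positivity)
        linarith
    _ ≤ _ := by
        have := mul_nonneg (Real.rpow_nonneg zero_le_two z) (kzCost_nonneg z X T)
        linarith

/-- Swapping the best center of a `γ`-approximate medoids solution `C` for the fixed point
`x` yields a `(2^z + 2^{2z} + 2^{2z}γ)`-approximation to the optimal `(k,z)`-medoids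
clustering of `X` constrained to contain a center at `x`. -/
theorem constrained_medoid_swap
    (d k : ℕ) (hd : 1 ≤ d) (hk : 1 ≤ k) (z γ : ℝ) (hz : 1 ≤ z) (hγ : 1 ≤ γ)
    (X : Finset (EuclideanSpace ℝ (Fin d))) (hX : k < X.card)
    (x : EuclideanSpace ℝ (Fin d)) (hx : x ∈ X)
    (C : Finset (EuclideanSpace ℝ (Fin d))) (hCX : C ⊆ X) (hCne : C.Nonempty)
    (hCk : C.card ≤ k)
    (happrox : ∀ T : Finset (EuclideanSpace ℝ (Fin d)),
      T ⊆ X → T.Nonempty → T.card ≤ k → kzCost z X C ≤ γ * kzCost z X T)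
    (W : Finset (EuclideanSpace ℝ (Fin d))) (hWC : W ⊆ C) (hWk : W.card ≤ k - 1)
    (hWmin : ∀ W' : Finset (EuclideanSpace ℝ (Fin d)), W' ⊆ C → W'.card ≤ k - 1 →
      kzCost z X (insert x W) ≤ kzCost z X (insert x W')) :
    sInf {r : ℝ | ∃ T : Finset (EuclideanSpace ℝ (Fin d)),
        T ⊆ X ∧ x ∈ T ∧ T.card ≤ k ∧ r = kzCost z X T} ≤ kzCost z X (insert x W) ∧
      kzCost z X (insert x W) ≤ (2 ^ z + 2 ^ (2 * z) + 2 ^ (2 * z) * γ) *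
        sInf {r : ℝ | ∃ T : Finset (EuclideanSpace ℝ (Fin d)),
          T ⊆ X ∧ x ∈ T ∧ T.card ≤ k ∧ r = kzCost z X T} :=
  constrained_medoid_swap_general d k hk z γ hz X x hx C hCX hCne happrox W hWC hWk hWmin
end

section
/- Fix an integer k ≥ 1, a real z ≥ 1, and reals ζ₁, ζ₂ ≥ 1. There exists a constant γ ≥ 1 depending only on z, ζ₁, ζ₂ such that for every instance of the constrained-clustering setup (with S, Q, Ψ, π_Q, n_b as in the setup): Ψ + n_b · r^z ≤ γ · Cost(X, S). -/
/-! Let `y` be counted in `n_b`, so its center `π y` lies within `r/2` of `x`. Since every center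
of `S` is at distance at least `r` from `x`, the triangle inequality through `x` and `π y` gives
`r/2 ≤ dist(y,S) + dist(y,Q)`, hence `r^z ≤ 4^z (dist(y,S)^z + dist(y,Q)^z)`. Summing over `y`,
`n_b r^z ≤ 4^z (Cost(X,S) + Cost(X,Q))`. As `S` is feasible for the problem `Q` approximates,
`Ψ ≤ ζ₂ Cost(X,Q) ≤ ζ₂ ζ₁ Cost(X,S)`, so `γ = ζ₂ ζ₁ + 4^z (1 + ζ₁)` works. -/

open scoped BigOperators Classical

open Metric

lemma dSet_eq_infDist {d : ℕ} (x : EuclideanSpace ℝ (Fin d))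
    (C : Finset (EuclideanSpace ℝ (Fin d))) : dSet x C = infDist x C := by
  rw [dSet, infDist_eq_iInf, sInf_image']

lemma dSet_nonneg_s6 {d : ℕ} (x : EuclideanSpace ℝ (Fin d))
    (C : Finset (EuclideanSpace ℝ (Fin d))) : 0 ≤ dSet x C :=
  dSet_eq_infDist x C ▸ infDist_nonneg

lemma Real.rpow_le_two_rpow_mul_add_rpow {a b c z : ℝ} (ha : 0 ≤ a) (hb : 0 ≤ b) (hc : 0 ≤ c)
    (hz : 0 ≤ z) (h : c ≤ a + b) : c ^ z ≤ 2 ^ z * (a ^ z + b ^ z) := by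
  have hmax : c ≤ 2 * max a b := h.trans (by linarith [le_max_left a b, le_max_right a b])
  have hmax_rpow : max a b ^ z ≤ a ^ z + b ^ z := by
    rcases max_choice a b with hab | hab <;> rw [hab]
    · linarith [Real.rpow_nonneg hb z]
    · linarith [Real.rpow_nonneg ha z]
  calc c ^ z ≤ (2 * max a b) ^ z := by gcongr
    _ = 2 ^ z * max a b ^ z := Real.mul_rpow (by norm_num) (ha.trans (le_max_left a b))
    _ ≤ 2 ^ z * (a ^ z + b ^ z) := by gcongr

lemma Metric.half_le_infDist_add_infDist {α : Type*} [PseudoMetricSpace α] {x y q : α}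
    {S Q : Set α} {r : ℝ} (hS : r ≤ infDist x S) (hqx : dist q x ≤ r / 2)
    (hyq : dist y q ≤ infDist y Q) : r / 2 ≤ infDist y S + infDist y Q := by
  have hxS := infDist_le_infDist_add_dist (x := x) (y := y) (s := S)
  linarith [dist_triangle x q y, dist_comm x q, dist_comm q y]

theorem card_mul_rpow_le_kzCost_add {d : ℕ} {z r : ℝ} (hz : 0 ≤ z) (hr : 0 ≤ r)
    {X S Q : Finset (EuclideanSpace ℝ (Fin d))} {x : EuclideanSpace ℝ (Fin d)}
    {π : EuclideanSpace ℝ (Fin d) → EuclideanSpace ℝ (Fin d)}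
    (hS : S.Nonempty) (hSfar : ∀ t ∈ S, r ≤ dist t x)
    (hπ : ∀ y ∈ X, dist y (π y) ≤ dSet y Q) :
    ((X.filter (fun y => dist (π y) x ≤ r / 2)).card : ℝ) * r ^ z
      ≤ 4 ^ z * (kzCost z X S + kzCost z X Q) := by
  have hxS : r ≤ infDist x S :=
    (le_infDist (by exact_mod_cast hS)).2 fun t ht => dist_comm x t ▸ hSfar t ht
  have hpoint : ∀ y ∈ X.filter (fun y => dist (π y) x ≤ r / 2),
      r ^ z ≤ 4 ^ z * (dSet y S ^ z + dSet y Q ^ z) := by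
    intro y hy
    rw [Finset.mem_filter] at hy
    have hhalf : r / 2 ≤ dSet y S + dSet y Q := by
      rw [dSet_eq_infDist, dSet_eq_infDist]
      exact half_le_infDist_add_infDist hxS hy.2 (dSet_eq_infDist y Q ▸ hπ y hy.1)
    calc r ^ z = 2 ^ z * (r / 2) ^ z := by
          rw [← Real.mul_rpow (by norm_num) (by linarith), mul_div_cancel₀ r two_ne_zero]
      _ ≤ 2 ^ z * (2 ^ z * (dSet y S ^ z + dSet y Q ^ z)) := by
          gcongr
          exact Real.rpow_le_two_rpow_mul_add_rpow (dSet_nonneg_s6 y S) (dSet_nonneg_s6 y Q)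
            (by linarith) hz hhalf
      _ = 4 ^ z * (dSet y S ^ z + dSet y Q ^ z) := by
          rw [← mul_assoc, ← Real.mul_rpow (by norm_num) (by norm_num)]
          norm_num
  calc ((X.filter (fun y => dist (π y) x ≤ r / 2)).card : ℝ) * r ^ z
      ≤ ∑ y ∈ X.filter (fun y => dist (π y) x ≤ r / 2),
          4 ^ z * (dSet y S ^ z + dSet y Q ^ z) := by
        simpa using Finset.card_nsmul_le_sum _ _ _ hpoint
    _ ≤ ∑ y ∈ X, 4 ^ z * (dSet y S ^ z + dSet y Q ^ z) :=
        Finset.sum_le_sum_of_subset_of_nonneg (Finset.filter_subset _ _) fun y _ _ => by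
          have := dSet_nonneg_s6 y S
          have := dSet_nonneg_s6 y Q
          positivity
    _ = 4 ^ z * (kzCost z X S + kzCost z X Q) := by
        rw [← Finset.mul_sum, Finset.sum_add_distrib, kzCost, kzCost]

/-- The estimate `Ψ + n_b · r^z` never overestimates (up to a constant factor) the optimal
constrained `(k,z)`-medoids cost `Cost(X,S)`, where `S` contains `p`, has no center in the
interior of `B_r(x)`, `Q` is a `ζ₁`-approximate medoids solution containing `p`, `Ψ` is a
`ζ₂`-approximation of `Cost(X,Q)`, and `n_b` counts points assigned by `π` to centers in
`B_{r/2}(x)`. -/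
theorem constrained_estimate_underestimates
    (z ζ₁ ζ₂ : ℝ) (hz : 1 ≤ z) (hζ₁ : 1 ≤ ζ₁) (hζ₂ : 1 ≤ ζ₂) :
    ∃ γ : ℝ, 1 ≤ γ ∧
      ∀ (k d : ℕ), 1 ≤ k → 1 ≤ d →
        ∀ (X S Q : Finset (EuclideanSpace ℝ (Fin d))) (x p : EuclideanSpace ℝ (Fin d))
          (Ψ : ℝ) (π : EuclideanSpace ℝ (Fin d) → EuclideanSpace ℝ (Fin d)),
          k < X.card → x ∈ X → p ∈ X → 0 < dist x p →
          S ⊆ X → p ∈ S → S.card ≤ k → (∀ t ∈ S, dist x p ≤ dist t x) →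
          (∀ T : Finset (EuclideanSpace ℝ (Fin d)), T ⊆ X → p ∈ T → T.card ≤ k →
            (∀ t ∈ T, dist x p ≤ dist t x) → kzCost z X S ≤ kzCost z X T) →
          Q ⊆ X → p ∈ Q → Q.card ≤ k →
          (∀ T : Finset (EuclideanSpace ℝ (Fin d)), T ⊆ X → p ∈ T → T.card ≤ k →
            kzCost z X Q ≤ ζ₁ * kzCost z X T) →
          (1 / ζ₂) * kzCost z X Q ≤ Ψ → Ψ ≤ ζ₂ * kzCost z X Q →
          (∀ y ∈ X, π y ∈ Q ∧ dist y (π y) = dSet y Q) →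
          Ψ + ((X.filter (fun y => dist (π y) x ≤ dist x p / 2)).card : ℝ)
              * dist x p ^ z ≤ γ * kzCost z X S := by
  have hz0 : 0 ≤ z := by linarith
  have h4z : 1 ≤ (4 : ℝ) ^ z := Real.one_le_rpow (by norm_num) hz0
  refine ⟨ζ₂ * ζ₁ + 4 ^ z * (1 + ζ₁), by nlinarith, ?_⟩
  intro k d _ _ X S Q x p Ψ π _ _ _ _ hSX hpS hSk hSfar _ _ _ _ hQapx _ hΨ hπ
  have hQS : kzCost z X Q ≤ ζ₁ * kzCost z X S := hQapx S hSX hpS hSk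
  have hnb := card_mul_rpow_le_kzCost_add hz0 dist_nonneg ⟨p, hpS⟩ hSfar
    fun y hy => (hπ y hy).2.le
  calc Ψ + ((X.filter (fun y => dist (π y) x ≤ dist x p / 2)).card : ℝ) * dist x p ^ z
      ≤ ζ₂ * kzCost z X Q + 4 ^ z * (kzCost z X S + kzCost z X Q) := by gcongr
    _ ≤ ζ₂ * (ζ₁ * kzCost z X S) + 4 ^ z * (kzCost z X S + ζ₁ * kzCost z X S) := by
        gcongr
    _ = (ζ₂ * ζ₁ + 4 ^ z * (1 + ζ₁)) * kzCost z X S := by ring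
end

section
/- For every ε ∈ (0, 1/2), every real p ≥ 1, every integer d ≥ 1, and every D ≥ 1, there exists ε'₀ > 0 depending only on ε, p, d, and D (and not on n) such that the following holds for every integer n ≥ 1 and all 0 < ε' ≤ ε'₀. Let B ∈ ℝ^{n×d} satisfy (1/D)·‖y‖_p ≤ ‖By‖_p ≤ D·‖y‖_p for all y ∈ ℝ^d, let B' ∈ ℝ^{n×d} satisfy |B'_{tj} − B_{tj}| ≤ ε'·|B_{tj}| for all entries, and let {1,…,n} = I₁ ⊔ … ⊔ I_m be any partition of the row indices. Then for every j ∈ {1,…,m} and all y ∈ ℝ^d: | Σ_{t∈I_j} |⟨b'_t, y⟩|^p − Σ_{t∈I_j} |⟨b_t, y⟩|^p | ≤ ε · ‖By‖_p^p, where b_t and b'_t denote the t-th rows of B and B' respectively. -/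
open scoped BigOperators

/-- The `L_p` norm of a vector `v ∈ ℝ^n`: `(Σ_i |v_i|^p)^{1/p}`. -/
noncomputable def lpNorm {n : ℕ} (p : ℝ) (v : Fin n → ℝ) : ℝ :=
  (∑ i, |v i| ^ p) ^ (1 / p)

/-!
Both `(By)_t` and the perturbation `(B'y)_t - (By)_t` are controlled by
`w_t = Σ_k |B_tk y_k|`, the latter with a factor `ε'`. By the mean value theorem for `x ↦ x^p`
on `[0, 2 w_t]`, each row changes its `p`-th power by at most `p 2^{p-1} ε' w_t^p`. Summing over
all rows, the power-mean inequality gives `Σ_t w_t^p ≤ d^{p-1} Σ_k ‖B e_k‖_p^p |y_k|^p`, and the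
two sides of the conditioning bound give `‖B e_k‖_p ≤ D` and `‖y‖_p ≤ D ‖By‖_p`. Hence the error
on any set of rows is at most `p 2^{p-1} d^{p-1} D^{2p} ε' ‖By‖_p^p`, with a constant free of `n`.
-/

open Finset Matrix

lemma abs_rpow_sub_rpow_le {p M a b : ℝ} (hp : 1 ≤ p) (ha : 0 ≤ a) (hb : 0 ≤ b)
    (haM : a ≤ M) (hbM : b ≤ M) : |a ^ p - b ^ p| ≤ p * M ^ (p - 1) * |a - b| := by
  have h := Convex.norm_image_sub_le_of_norm_hasDerivWithin_le
    (f := fun x : ℝ => x ^ p) (f' := fun x : ℝ => p * x ^ (p - 1)) (s := Set.Icc 0 M)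
    (fun x _ => (Real.hasDerivAt_rpow_const (Or.inr hp)).hasDerivWithinAt)
    (fun x hx => by
      rw [Real.norm_eq_abs, abs_mul, abs_of_nonneg (by linarith : (0 : ℝ) ≤ p),
        abs_of_nonneg (Real.rpow_nonneg hx.1 _)]
      exact mul_le_mul_of_nonneg_left
        (Real.rpow_le_rpow hx.1 hx.2 (by linarith)) (by linarith))
    (convex_Icc 0 M) ⟨hb, hbM⟩ ⟨ha, haM⟩
  simpa [Real.norm_eq_abs] using h

lemma abs_abs_rpow_sub_abs_rpow_le {p e u v w : ℝ} (hp : 1 ≤ p) (he : e ≤ 1)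
    (hv : |v| ≤ w) (huv : |u - v| ≤ e * w) :
    abs (|u| ^ p - |v| ^ p) ≤ p * 2 ^ (p - 1) * e * w ^ p := by
  have hw : 0 ≤ w := (abs_nonneg v).trans hv
  have hu : |u| ≤ 2 * w := by
    nlinarith [abs_sub_abs_le_abs_sub u v, mul_le_of_le_one_left hw he]
  calc abs (|u| ^ p - |v| ^ p) ≤ p * (2 * w) ^ (p - 1) * abs (|u| - |v|) :=
        abs_rpow_sub_rpow_le hp (abs_nonneg u) (abs_nonneg v) hu (by linarith)
    _ ≤ p * (2 * w) ^ (p - 1) * (e * w) := by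
        gcongr
        exact (abs_abs_sub_abs_le_abs_sub u v).trans huv
    _ = p * 2 ^ (p - 1) * e * w ^ p := by
        rw [Real.mul_rpow zero_le_two hw, ← sub_add_cancel p 1,
          Real.rpow_add_one' hw (by linarith), add_sub_cancel_right]
        ring

lemma abs_sum_abs_rpow_sub_sum_abs_rpow_le {ι : Type*} (s : Finset ι) {p e : ℝ}
    {u v w : ι → ℝ} (hp : 1 ≤ p) (he : e ≤ 1) (hv : ∀ t ∈ s, |v t| ≤ w t)
    (huv : ∀ t ∈ s, |u t - v t| ≤ e * w t) :
    |∑ t ∈ s, |u t| ^ p - ∑ t ∈ s, |v t| ^ p| ≤ p * 2 ^ (p - 1) * e * ∑ t ∈ s, w t ^ p := by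
  rw [← sum_sub_distrib, mul_sum]
  exact (abs_sum_le_sum_abs _ _).trans
    (sum_le_sum fun t ht => abs_abs_rpow_sub_abs_rpow_le hp he (hv t ht) (huv t ht))

section lpNorm

variable {n : ℕ} {p : ℝ}

lemma lpNorm_nonneg (p : ℝ) (v : Fin n → ℝ) : 0 ≤ lpNorm p v := by
  unfold lpNorm
  positivity

lemma lpNorm_rpow (hp : p ≠ 0) (v : Fin n → ℝ) : lpNorm p v ^ p = ∑ i, |v i| ^ p := by
  rw [lpNorm, one_div, Real.rpow_inv_rpow (by positivity) hp]

lemma lpNorm_single_one (hp : p ≠ 0) (k : Fin n) : lpNorm p (Pi.single k 1) = 1 := by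
  rw [lpNorm, sum_eq_single k (fun i _ hi => by simp [Pi.single_eq_of_ne hi, hp])
    (by simp)]
  simp

lemma sum_abs_rpow_le_of_lpNorm_le {c : ℝ} {v : Fin n → ℝ} (hp : 0 < p) (h : lpNorm p v ≤ c) :
    ∑ i, |v i| ^ p ≤ c ^ p := by
  rw [← lpNorm_rpow hp.ne' v]
  exact Real.rpow_le_rpow (lpNorm_nonneg p v) h hp.le

lemma sum_abs_col_rpow_le {d : ℕ} {D : ℝ} (hp : 0 < p) {B : Matrix (Fin n) (Fin d) ℝ}
    (hB : ∀ y, lpNorm p (B *ᵥ y) ≤ D * lpNorm p y) (k : Fin d) :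
    ∑ t, |B t k| ^ p ≤ D ^ p := by
  have h := hB (Pi.single k 1)
  rw [Matrix.mulVec_single_one, lpNorm_single_one hp.ne', mul_one] at h
  exact sum_abs_rpow_le_of_lpNorm_le hp h

end lpNorm

section absMulVec

variable {m l : Type*} [Fintype l]

noncomputable def absMulVec (B : Matrix m l ℝ) (y : l → ℝ) (t : m) : ℝ :=
  ∑ k, |B t k * y k|

lemma absMulVec_nonneg (B : Matrix m l ℝ) (y : l → ℝ) (t : m) : 0 ≤ absMulVec B y t :=
  sum_nonneg fun _ _ => abs_nonneg _

lemma abs_mulVec_le_absMulVec (B : Matrix m l ℝ) (y : l → ℝ) (t : m) :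
    |(B *ᵥ y) t| ≤ absMulVec B y t :=
  abs_sum_le_sum_abs _ _

lemma abs_mulVec_sub_mulVec_le_absMulVec {ε' : ℝ} {B B' : Matrix m l ℝ} {t : m}
    (h : ∀ k, |B' t k - B t k| ≤ ε' * |B t k|) (y : l → ℝ) :
    |(B' *ᵥ y) t - (B *ᵥ y) t| ≤ ε' * absMulVec B y t := by
  rw [← Pi.sub_apply, ← Matrix.sub_mulVec, absMulVec, mul_sum]
  refine (abs_sum_le_sum_abs _ _).trans (sum_le_sum fun k _ => ?_)
  change |(B' t k - B t k) * y k| ≤ _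
  rw [abs_mul, abs_mul, ← mul_assoc]
  exact mul_le_mul_of_nonneg_right (h k) (abs_nonneg _)

lemma sum_absMulVec_rpow_le [Fintype m] {p : ℝ} (hp : 1 ≤ p) (B : Matrix m l ℝ) (y : l → ℝ) :
    ∑ t, absMulVec B y t ^ p ≤
      (Fintype.card l : ℝ) ^ (p - 1) * ∑ k, (∑ t, |B t k| ^ p) * |y k| ^ p := by
  calc ∑ t, absMulVec B y t ^ p
      ≤ ∑ t, (Fintype.card l : ℝ) ^ (p - 1) * ∑ k, |B t k * y k| ^ p :=
        sum_le_sum fun t _ => by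
          have h := Real.rpow_sum_le_const_mul_sum_rpow univ (fun k => B t k * y k) hp
          rwa [card_univ] at h
    _ = (Fintype.card l : ℝ) ^ (p - 1) * ∑ k, (∑ t, |B t k| ^ p) * |y k| ^ p := by
        simp only [← mul_sum, abs_mul, Real.mul_rpow (abs_nonneg _) (abs_nonneg _), sum_mul]
        rw [sum_comm]

end absMulVec

lemma sum_absMulVec_rpow_le_of_lpNorm_le {n d : ℕ} {p D : ℝ} (hp : 1 ≤ p) (hD : 0 ≤ D)
    {B : Matrix (Fin n) (Fin d) ℝ} (hB : ∀ y, lpNorm p (B *ᵥ y) ≤ D * lpNorm p y)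
    {y : Fin d → ℝ} (hy : lpNorm p y ≤ D * lpNorm p (B *ᵥ y)) :
    ∑ t, absMulVec B y t ^ p ≤ (d : ℝ) ^ (p - 1) * (D ^ p * D ^ p) * lpNorm p (B *ᵥ y) ^ p := by
  have hp0 : 0 < p := by linarith
  calc ∑ t, absMulVec B y t ^ p ≤ (d : ℝ) ^ (p - 1) * ∑ k, (∑ t, |B t k| ^ p) * |y k| ^ p := by
        simpa using sum_absMulVec_rpow_le hp B y
    _ ≤ (d : ℝ) ^ (p - 1) * ∑ k, D ^ p * |y k| ^ p := by
        gcongr with k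
        exact sum_abs_col_rpow_le hp0 hB k
    _ = (d : ℝ) ^ (p - 1) * D ^ p * ∑ k, |y k| ^ p := by rw [mul_assoc, ← mul_sum]
    _ ≤ (d : ℝ) ^ (p - 1) * D ^ p * (D * lpNorm p (B *ᵥ y)) ^ p := by
        gcongr
        exact sum_abs_rpow_le_of_lpNorm_le hp0 hy
    _ = (d : ℝ) ^ (p - 1) * (D ^ p * D ^ p) * lpNorm p (B *ᵥ y) ^ p := by
        rw [Real.mul_rpow hD (lpNorm_nonneg _ _)]
        ring

theorem entrywise_rounding_partition_additive_error_general
    (ε : ℝ) (hε0 : 0 < ε) (p : ℝ) (hp : 1 ≤ p)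
    (d : ℕ) (hd : 1 ≤ d) (D : ℝ) (hD : 1 ≤ D) :
    ∃ ε'₀ : ℝ, 0 < ε'₀ ∧
      ∀ (n : ℕ), 1 ≤ n → ∀ ε' : ℝ, 0 < ε' → ε' ≤ ε'₀ →
        ∀ B B' : Matrix (Fin n) (Fin d) ℝ,
          (∀ y : Fin d → ℝ,
            (1 / D) * lpNorm p y ≤ lpNorm p (B.mulVec y) ∧
              lpNorm p (B.mulVec y) ≤ D * lpNorm p y) →
          (∀ t j, |B' t j - B t j| ≤ ε' * |B t j|) →
          ∀ (m : ℕ) (P : Fin m → Finset (Fin n)),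
            (∀ i j, i ≠ j → Disjoint (P i) (P j)) →
            (∀ t : Fin n, ∃ i, t ∈ P i) →
            ∀ (j : Fin m) (y : Fin d → ℝ),
              |(∑ t ∈ P j, |B'.mulVec y t| ^ p) - ∑ t ∈ P j, |B.mulVec y t| ^ p| ≤
                ε * lpNorm p (B.mulVec y) ^ p := by
  have hDpos : 0 < D := by linarith
  have hdpos : (0 : ℝ) < d := by exact_mod_cast hd
  set C := p * 2 ^ (p - 1) * ((d : ℝ) ^ (p - 1) * (D ^ p * D ^ p))
  have hCpos : 0 < C := by positivity
  refine ⟨min 1 (ε / C), lt_min one_pos (div_pos hε0 hCpos), ?_⟩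
  intro n _ ε' _ hε' B B' hB hBB' m P _ _ j y
  have hy : lpNorm p y ≤ D * lpNorm p (B *ᵥ y) := by
    have := (hB y).1
    rwa [one_div, inv_mul_le_iff₀ hDpos] at this
  calc _ ≤ p * 2 ^ (p - 1) * ε' * ∑ t ∈ P j, absMulVec B y t ^ p :=
        abs_sum_abs_rpow_sub_sum_abs_rpow_le (P j) hp (hε'.trans (min_le_left _ _))
          (fun t _ => abs_mulVec_le_absMulVec B y t)
          (fun t _ => abs_mulVec_sub_mulVec_le_absMulVec (hBB' t) y)
    _ ≤ p * 2 ^ (p - 1) * ε' * ∑ t, absMulVec B y t ^ p := by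
        gcongr
        · exact fun t _ _ => Real.rpow_nonneg (absMulVec_nonneg B y t) p
        · exact subset_univ _
    _ ≤ p * 2 ^ (p - 1) * ε' * ((d : ℝ) ^ (p - 1) * (D ^ p * D ^ p) * lpNorm p (B *ᵥ y) ^ p) := by
        gcongr
        exact sum_absMulVec_rpow_le_of_lpNorm_le hp hDpos.le (fun y => (hB y).2) hy
    _ = ε' * C * lpNorm p (B *ᵥ y) ^ p := by ring
    _ ≤ ε / C * C * lpNorm p (B *ᵥ y) ^ p :=
        mul_le_mul_of_nonneg_right (mul_le_mul_of_nonneg_right (hε'.trans (min_le_right _ _))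
          hCpos.le) (Real.rpow_nonneg (lpNorm_nonneg _ _) _)
    _ = ε * lpNorm p (B *ᵥ y) ^ p := by field_simp

/-- If `B` is well-conditioned and `B'` agrees with `B` entrywise up to relative error
`ε'`, then for any partition of the row indices, the `L_p^p` contribution of each part is
preserved up to additive error `ε·‖By‖_p^p`, provided `ε'` is small enough depending only
on `ε`, `p`, `d`, `D` (and not on `n`). -/
theorem entrywise_rounding_partition_additive_error
    (ε : ℝ) (hε0 : 0 < ε) (hε : ε < 1 / 2) (p : ℝ) (hp : 1 ≤ p)
    (d : ℕ) (hd : 1 ≤ d) (D : ℝ) (hD : 1 ≤ D) :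
    ∃ ε'₀ : ℝ, 0 < ε'₀ ∧
      ∀ (n : ℕ), 1 ≤ n → ∀ ε' : ℝ, 0 < ε' → ε' ≤ ε'₀ →
        ∀ B B' : Matrix (Fin n) (Fin d) ℝ,
          (∀ y : Fin d → ℝ,
            (1 / D) * lpNorm p y ≤ lpNorm p (B.mulVec y) ∧
              lpNorm p (B.mulVec y) ≤ D * lpNorm p y) →
          (∀ t j, |B' t j - B t j| ≤ ε' * |B t j|) →
          ∀ (m : ℕ) (P : Fin m → Finset (Fin n)),
            (∀ i j, i ≠ j → Disjoint (P i) (P j)) →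
            (∀ t : Fin n, ∃ i, t ∈ P i) →
            ∀ (j : Fin m) (y : Fin d → ℝ),
              |(∑ t ∈ P j, |B'.mulVec y t| ^ p) - ∑ t ∈ P j, |B.mulVec y t| ^ p| ≤
                ε * lpNorm p (B.mulVec y) ^ p :=
  entrywise_rounding_partition_additive_error_general ε hε0 p hp d hd D hD
end
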